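/- Policy performance upper bound (Lemma 3.1, upper inequality): in a finite discounted MDP, for any two policies π and π' with (π s a = 0 → π' s a = 0) and any signal F : S → A → ℝ, J_F(π') − J_F(π) ≤ (1/(1−γ)) · 𝔸_F(π,π') + (√2 · γ · ε_F(π,π') / (1−γ)²) · √(D̄_KL(π'‖π)). -/

import Mathlib

/-!
The performance difference identity `(1 - γ) (J(π') - J(π)) = ∑ₛ d_{π'}(s) Ā(s)`, with
`Ā(s) = ∑ₐ π'(s, a) A^π(s, a)`, follows from the Bellman equations `V = r + γ P_π V` and
`d = (1 - γ) ρ₀ + γ d P_π`. Replacing `d_{π'}` by `d_π` costs at most `ε ‖d_{π'} - d_π‖₁`, and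
subtracting the two occupancy equations gives
`(1 - γ) ‖d_{π'} - d_π‖₁ ≤ γ ∑ₛ d_π(s) ‖π'(s) - π(s)‖₁`. Pinsker's inequality
`‖p - q‖₁ ≤ √(2 KL(p‖q))` and Jensen's inequality for `√` bound the last sum by `√2 √(D̄_KL)`.
-/

open Real BigOperators

/-- Induced transition matrix of policy `pol`: `P_pol(s,s') = ∑ a, pol s a * P s a s'`. -/
noncomputable def transMat {S A : Type*} [Fintype A] (P : S → A → S → ℝ)
    (pol : S → A → ℝ) : Matrix S S ℝ :=
  fun s s' => ∑ a, pol s a * P s a s'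

/-- Discounted state visitation distribution
`d_pol(s) = (1-γ) ∑ₜ γ^t ∑_{s0} ρ0 s0 * (P_pol^t)(s0,s)`. -/
noncomputable def dVisit {S A : Type*} [Fintype S] [DecidableEq S] [Fintype A]
    (P : S → A → S → ℝ) (γ : ℝ) (ρ0 : S → ℝ) (pol : S → A → ℝ) (s : S) : ℝ :=
  (1 - γ) * ∑' t : ℕ, γ ^ t * ∑ s0, ρ0 s0 * (transMat P pol ^ t) s0 s

/-- Value function of signal `F` under policy `pol`. -/
noncomputable def Vfun {S A : Type*} [Fintype S] [DecidableEq S] [Fintype A]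
    (P : S → A → S → ℝ) (γ : ℝ) (F : S → A → ℝ) (pol : S → A → ℝ) (s : S) : ℝ :=
  ∑' t : ℕ, γ ^ t * ∑ s', (transMat P pol ^ t) s s' * ∑ a, pol s' a * F s' a

/-- Return `J_F(pol) = ∑ s, ρ0 s * V_F^pol(s)`. -/
noncomputable def Jret {S A : Type*} [Fintype S] [DecidableEq S] [Fintype A]
    (P : S → A → S → ℝ) (γ : ℝ) (ρ0 : S → ℝ) (F : S → A → ℝ) (pol : S → A → ℝ) : ℝ :=
  ∑ s, ρ0 s * Vfun P γ F pol s

/-- Action-value function `Q_F^pol(s,a) = F s a + γ ∑_{s'} P s a s' * V_F^pol(s')`. -/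
noncomputable def Qfun {S A : Type*} [Fintype S] [DecidableEq S] [Fintype A]
    (P : S → A → S → ℝ) (γ : ℝ) (F : S → A → ℝ) (pol : S → A → ℝ) (s : S) (a : A) : ℝ :=
  F s a + γ * ∑ s', P s a s' * Vfun P γ F pol s'

/-- Advantage function `A_F^pol(s,a) = Q_F^pol(s,a) - V_F^pol(s)`. -/
noncomputable def Adv {S A : Type*} [Fintype S] [DecidableEq S] [Fintype A]
    (P : S → A → S → ℝ) (γ : ℝ) (F : S → A → ℝ) (pol : S → A → ℝ) (s : S) (a : A) : ℝ :=
  Qfun P γ F pol s a - Vfun P γ F pol s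

/-- Expected surrogate advantage
`𝔸_F(pol,pol') = ∑ s, d_pol(s) ∑ a, pol' s a * A_F^pol(s,a)`. -/
noncomputable def surrAdv {S A : Type*} [Fintype S] [DecidableEq S] [Fintype A]
    (P : S → A → S → ℝ) (γ : ℝ) (ρ0 : S → ℝ) (F : S → A → ℝ)
    (pol pol' : S → A → ℝ) : ℝ :=
  ∑ s, dVisit P γ ρ0 pol s * ∑ a, pol' s a * Adv P γ F pol s a

/-- `ε_F(pol,pol') = max_s |∑ a, pol' s a * A_F^pol(s,a)|`. -/
noncomputable def epsAdv {S A : Type*} [Fintype S] [DecidableEq S] [Fintype A] [Nonempty S]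
    (P : S → A → S → ℝ) (γ : ℝ) (F : S → A → ℝ) (pol pol' : S → A → ℝ) : ℝ :=
  Finset.univ.sup' Finset.univ_nonempty fun s => |∑ a, pol' s a * Adv P γ F pol s a|

/-- Per-state KL divergence `KL(pol'‖pol)(s) = ∑ a, pol' s a * log (pol' s a / pol s a)`
(with the convention `0 * log 0 = 0`, automatic since `Real.log 0 = 0`). -/
noncomputable def klState {S A : Type*} [Fintype A] (pol' pol : S → A → ℝ) (s : S) : ℝ :=
  ∑ a, pol' s a * Real.log (pol' s a / pol s a)

/-- Averaged KL divergence `D̄_KL(pol'‖pol) = ∑ s, d_pol(s) * KL(pol'‖pol)(s)`. -/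
noncomputable def avgKL {S A : Type*} [Fintype S] [DecidableEq S] [Fintype A]
    (P : S → A → S → ℝ) (γ : ℝ) (ρ0 : S → ℝ) (pol' pol : S → A → ℝ) : ℝ :=
  ∑ s, dVisit P γ ρ0 pol s * klState pol' pol s

open Matrix Finset

lemma monotoneOn_add_one_mul_log_sub_two_mul :
    MonotoneOn (fun x : ℝ => (x + 1) * log x - 2 * (x - 1)) (Set.Ioi 0) := by
  have hderiv : ∀ x : ℝ, 0 < x →
      HasDerivAt (fun x : ℝ => (x + 1) * log x - 2 * (x - 1)) (log x + x⁻¹ - 1) x := by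
    intro x hx
    refine ((((hasDerivAt_id x).add_const 1).mul (hasDerivAt_log hx.ne')).sub
      (((hasDerivAt_id x).sub_const 1).const_mul 2)).congr_deriv ?_
    simp only [id]
    field_simp
    ring
  refine monotoneOn_of_deriv_nonneg (convex_Ioi 0)
    (fun x hx => (hderiv x hx).continuousAt.continuousWithinAt)
    (fun x hx => ?_) (fun x hx => ?_) <;> rw [interior_Ioi] at hx
  · exact (hderiv x hx).differentiableAt.differentiableWithinAt
  · rw [(hderiv x hx).deriv]
    linarith [one_sub_inv_le_log_of_pos hx]

lemma three_mul_sq_sub_one_le {x : ℝ} (hx : 0 ≤ x) :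
    3 * (x - 1) ^ 2 ≤ 2 * (x + 2) * (x * log x - x + 1) := by
  set ψ : ℝ → ℝ := fun y => 2 * (y + 2) * (y * log y - y + 1) - 3 * (y - 1) ^ 2
  -- `ψ' = 4 h` for the monotone `h` above, and `h 1 = 0`: so `ψ` decreases on `[0, 1]` and
  -- increases on `[1, ∞)`, with `ψ 1 = 0`
  have hderiv : ∀ y : ℝ, 0 < y → HasDerivAt ψ (4 * ((y + 1) * log y - 2 * (y - 1))) y := by
    intro y hy
    refine ((((hasDerivAt_id y).add_const 2).const_mul 2).mul
      (((hasDerivAt_mul_log hy.ne').sub (hasDerivAt_id y)).add_const 1)).sub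
      ((((hasDerivAt_id y).sub_const 1).pow 2).const_mul 3) |>.congr_deriv ?_
    simp only [id, Pi.sub_apply]
    ring
  have hψ : Continuous ψ := by fun_prop
  have hh := monotoneOn_add_one_mul_log_sub_two_mul
  have hψ1 : ψ 1 = 0 := by simp [ψ]
  suffices 0 ≤ ψ x by simp only [ψ] at this; linarith
  rcases le_total x 1 with hx1 | hx1
  · have hanti : AntitoneOn ψ (Set.Icc 0 1) := by
      refine antitoneOn_of_deriv_nonpos (convex_Icc 0 1) hψ.continuousOn
        (fun y hy => ?_) (fun y hy => ?_) <;> rw [interior_Icc] at hy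
      · exact (hderiv y hy.1).differentiableAt.differentiableWithinAt
      · rw [(hderiv y hy.1).deriv]
        have := hh hy.1 (Set.mem_Ioi.2 one_pos) hy.2.le
        simp only [log_one] at this
        linarith
    simpa [hψ1] using hanti ⟨hx, hx1⟩ ⟨zero_le_one, le_rfl⟩ hx1
  · have hmono : MonotoneOn ψ (Set.Ici 1) := by
      refine monotoneOn_of_deriv_nonneg (convex_Ici 1) hψ.continuousOn
        (fun y hy => ?_) (fun y hy => ?_) <;> rw [interior_Ici] at hy
      · exact (hderiv y (one_pos.trans hy)).differentiableAt.differentiableWithinAt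
      · rw [(hderiv y (one_pos.trans hy)).deriv]
        have := hh (Set.mem_Ioi.2 one_pos) (Set.mem_Ioi.2 (one_pos.trans hy)) hy.le
        simp only [log_one] at this
        linarith
    simpa [hψ1] using hmono (Set.mem_Ici.2 le_rfl) hx1 hx1

lemma sq_sub_div_le_mul_log {p q : ℝ} (hp : 0 ≤ p) (hq : 0 ≤ q) (hpq : q = 0 → p = 0) :
    (p - q) ^ 2 / (p + 2 * q) ≤ 2 / 3 * (p * log (p / q) - p + q) := by
  rcases hq.eq_or_lt with rfl | hq
  · simp [hpq rfl]
  obtain ⟨x, hx, rfl⟩ : ∃ x, 0 ≤ x ∧ p = q * x := ⟨p / q, by positivity, by field_simp⟩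
  rw [div_le_iff₀ (by positivity), mul_div_cancel_left₀ x hq.ne']
  nlinarith [mul_le_mul_of_nonneg_left (three_mul_sq_sub_one_le hx) (sq_nonneg q)]

theorem sq_sum_abs_sub_le_two_mul_sum_mul_log {ι : Type*} [Fintype ι] {p q : ι → ℝ}
    (hp0 : ∀ i, 0 ≤ p i) (hq0 : ∀ i, 0 ≤ q i) (hp1 : ∑ i, p i = 1) (hq1 : ∑ i, q i = 1)
    (hpq : ∀ i, q i = 0 → p i = 0) :
    (∑ i, |p i - q i|) ^ 2 ≤ 2 * ∑ i, p i * log (p i / q i) := by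
  have hcs : (∑ i, |p i - q i|) ^ 2 ≤
      (∑ i, (p i + 2 * q i)) * ∑ i, (p i - q i) ^ 2 / (p i + 2 * q i) := by
    refine sum_sq_le_sum_mul_sum_of_sq_le_mul _ (fun i _ => ?_) (fun i _ => ?_)
      (fun i _ => ?_)
    · linarith [hp0 i, hq0 i]
    · exact div_nonneg (sq_nonneg _) (by linarith [hp0 i, hq0 i])
    · rw [sq_abs, mul_div_assoc']
      rcases (show 0 ≤ p i + 2 * q i by linarith [hp0 i, hq0 i]).eq_or_lt with h | h
      · have hp : p i = 0 := by linarith [hp0 i, hq0 i]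
        have hq : q i = 0 := by linarith [hp0 i, hq0 i]
        simp [hp, hq]
      · rw [le_div_iff₀ h, mul_comm]
  have hw : ∑ i, (p i + 2 * q i) = 3 := by
    rw [sum_add_distrib, ← mul_sum, hp1, hq1]; norm_num
  have hterm : ∑ i, (p i - q i) ^ 2 / (p i + 2 * q i) ≤ 2 / 3 * ∑ i, p i * log (p i / q i) := by
    calc ∑ i, (p i - q i) ^ 2 / (p i + 2 * q i)
        ≤ ∑ i, 2 / 3 * (p i * log (p i / q i) - p i + q i) :=
          sum_le_sum fun i _ => sq_sub_div_le_mul_log (hp0 i) (hq0 i) (hpq i)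
      _ = 2 / 3 * ∑ i, p i * log (p i / q i) := by
          rw [← mul_sum, sum_add_distrib, sum_sub_distrib, hp1, hq1]
          ring
  rw [hw] at hcs
  linarith

theorem sum_mul_log_div_nonneg {ι : Type*} [Fintype ι] {p q : ι → ℝ}
    (hp0 : ∀ i, 0 ≤ p i) (hq0 : ∀ i, 0 ≤ q i) (hp1 : ∑ i, p i = 1) (hq1 : ∑ i, q i = 1)
    (hpq : ∀ i, q i = 0 → p i = 0) :
    0 ≤ ∑ i, p i * log (p i / q i) := by
  nlinarith [sq_sum_abs_sub_le_two_mul_sum_mul_log hp0 hq0 hp1 hq1 hpq,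
    sq_nonneg (∑ i, |p i - q i|)]

theorem sum_abs_sub_le_sqrt_two_mul_sum_mul_log {ι : Type*} [Fintype ι] {p q : ι → ℝ}
    (hp0 : ∀ i, 0 ≤ p i) (hq0 : ∀ i, 0 ≤ q i) (hp1 : ∑ i, p i = 1) (hq1 : ∑ i, q i = 1)
    (hpq : ∀ i, q i = 0 → p i = 0) :
    ∑ i, |p i - q i| ≤ √2 * √(∑ i, p i * log (p i / q i)) := by
  rw [← Real.sqrt_mul zero_le_two]
  exact Real.le_sqrt_of_sq_le (sq_sum_abs_sub_le_two_mul_sum_mul_log hp0 hq0 hp1 hq1 hpq)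

lemma dotProduct_le_mul_sum_abs {ι : Type*} [Fintype ι] {u f : ι → ℝ} {ε : ℝ}
    (hf : ∀ i, |f i| ≤ ε) : u ⬝ᵥ f ≤ ε * ∑ i, |u i| := by
  rw [mul_sum]
  refine sum_le_sum fun i _ => (le_abs_self _).trans ?_
  rw [abs_mul, mul_comm ε]
  exact mul_le_mul_of_nonneg_left (hf i) (abs_nonneg _)

lemma sum_abs_vecMul_le {m n : Type*} [Fintype m] [Fintype n] (x : m → ℝ) (N : Matrix m n ℝ) :
    ∑ j, |(x ᵥ* N) j| ≤ ∑ i, |x i| * ∑ j, |N i j| := by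
  calc ∑ j, |(x ᵥ* N) j| ≤ ∑ j, ∑ i, |x i| * |N i j| := by
        refine sum_le_sum fun j _ => (abs_sum_le_sum_abs _ _).trans_eq ?_
        simp only [abs_mul]
    _ = ∑ i, |x i| * ∑ j, |N i j| := by
        rw [sum_comm]
        simp only [mul_sum]

section Resolvent

variable {S : Type*} [Fintype S] [DecidableEq S] {M : Matrix S S ℝ} {γ : ℝ}

/-- The Neumann series of `(1 - γ M)⁻¹`. -/
noncomputable def discountedResolvent (γ : ℝ) (M : Matrix S S ℝ) : Matrix S S ℝ :=
  ∑' t : ℕ, γ ^ t • M ^ t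

lemma summable_pow_smul_pow (hM : M ∈ rowStochastic ℝ S) (hγ0 : 0 ≤ γ) (hγ1 : γ < 1) :
    Summable fun t : ℕ => γ ^ t • M ^ t := by
  refine Pi.summable.2 fun i => Pi.summable.2 fun j => ?_
  have hMt (t : ℕ) : M ^ t ∈ rowStochastic ℝ S := pow_mem hM t
  refine (summable_geometric_of_lt_one hγ0 hγ1).of_nonneg_of_le (fun t => ?_) (fun t => ?_)
  · exact mul_nonneg (pow_nonneg hγ0 t) (nonneg_of_mem_rowStochastic (hMt t))
  · exact mul_le_of_le_one_right (pow_nonneg hγ0 t) (le_one_of_mem_rowStochastic (hMt t))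

lemma discountedResolvent_eq_one_add_mul (hM : M ∈ rowStochastic ℝ S) (hγ0 : 0 ≤ γ)
    (hγ1 : γ < 1) : discountedResolvent γ M = 1 + γ • (M * discountedResolvent γ M) := by
  have hs := summable_pow_smul_pow hM hγ0 hγ1
  calc discountedResolvent γ M = γ ^ 0 • M ^ 0 + ∑' t : ℕ, γ ^ (t + 1) • M ^ (t + 1) :=
        hs.tsum_eq_zero_add
    _ = _ := by
        rw [discountedResolvent, ← hs.tsum_mul_left, ← tsum_const_smul'']
        simp only [pow_zero, one_smul, pow_succ', mul_smul_comm, smul_smul]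

lemma discountedResolvent_eq_one_add_mul' (hM : M ∈ rowStochastic ℝ S) (hγ0 : 0 ≤ γ)
    (hγ1 : γ < 1) : discountedResolvent γ M = 1 + γ • (discountedResolvent γ M * M) := by
  have hs := summable_pow_smul_pow hM hγ0 hγ1
  calc discountedResolvent γ M = γ ^ 0 • M ^ 0 + ∑' t : ℕ, γ ^ (t + 1) • M ^ (t + 1) :=
        hs.tsum_eq_zero_add
    _ = _ := by
        rw [discountedResolvent, ← hs.tsum_mul_right, ← tsum_const_smul'']
        simp only [pow_zero, one_smul, pow_succ, smul_mul_assoc, smul_smul, mul_comm _ γ]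

lemma discountedResolvent_mulVec_apply (hM : M ∈ rowStochastic ℝ S) (hγ0 : 0 ≤ γ)
    (hγ1 : γ < 1) (r : S → ℝ) (s : S) :
    (discountedResolvent γ M *ᵥ r) s = ∑' t : ℕ, γ ^ t * (M ^ t *ᵥ r) s := by
  have := (summable_pow_smul_pow hM hγ0 hγ1).map_tsum
    (AddMonoidHom.mk' (fun B : Matrix S S ℝ => (B *ᵥ r) s) fun B C => by simp [add_mulVec])
    (by simp only [AddMonoidHom.mk'_apply]; fun_prop)
  simpa [discountedResolvent, smul_mulVec] using this

lemma vecMul_discountedResolvent_apply (hM : M ∈ rowStochastic ℝ S) (hγ0 : 0 ≤ γ)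
    (hγ1 : γ < 1) (ρ : S → ℝ) (s : S) :
    (ρ ᵥ* discountedResolvent γ M) s = ∑' t : ℕ, γ ^ t * (ρ ᵥ* M ^ t) s := by
  have := (summable_pow_smul_pow hM hγ0 hγ1).map_tsum
    (AddMonoidHom.mk' (fun B : Matrix S S ℝ => (ρ ᵥ* B) s) fun B C => by simp [vecMul_add])
    (by simp only [AddMonoidHom.mk'_apply]; fun_prop)
  simpa [discountedResolvent, vecMul_smul] using this

end Resolvent

section Bellman

variable {S : Type*} [Fintype S] {γ : ℝ}

lemma dotProduct_bellman_residual_eq {d ρ r V V' : S → ℝ} {M : Matrix S S ℝ}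
    (hd : d = (1 - γ) • ρ + γ • d ᵥ* M) (hV' : V' = r + γ • M *ᵥ V') :
    d ⬝ᵥ (r + γ • M *ᵥ V - V) = (1 - γ) * (ρ ⬝ᵥ V' - ρ ⬝ᵥ V) := by
  have hdW (W : S → ℝ) : d ⬝ᵥ W = (1 - γ) * ρ ⬝ᵥ W + γ * (d ᵥ* M) ⬝ᵥ W := by
    conv_lhs => rw [hd]
    simp only [add_dotProduct, smul_dotProduct, smul_eq_mul]
  have hdV' : d ⬝ᵥ V' = d ⬝ᵥ r + γ * (d ᵥ* M) ⬝ᵥ V' := by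
    conv_lhs => rw [hV']
    simp only [dotProduct_add, dotProduct_smul, dotProduct_mulVec, smul_eq_mul]
  simp only [dotProduct_sub, dotProduct_add, dotProduct_smul, dotProduct_mulVec, smul_eq_mul]
  linear_combination hdW V' - hdV' - hdW V

lemma one_sub_mul_sum_abs_sub_le [DecidableEq S] {d d' ρ : S → ℝ} {M M' : Matrix S S ℝ}
    (hM' : M' ∈ rowStochastic ℝ S) (hγ0 : 0 ≤ γ)
    (hd : d = (1 - γ) • ρ + γ • d ᵥ* M) (hd' : d' = (1 - γ) • ρ + γ • d' ᵥ* M') :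
    (1 - γ) * ∑ s, |d' s - d s| ≤ γ * ∑ k, |d k| * ∑ s, |M' k s - M k s| := by
  have hdiff : d' - d = γ • ((d' - d) ᵥ* M' + d ᵥ* (M' - M)) := by
    conv_lhs => rw [hd', hd]
    simp only [sub_vecMul, vecMul_sub]
    module
  have hpt (s : S) : d' s - d s = γ * (((d' - d) ᵥ* M') s + (d ᵥ* (M' - M)) s) := by
    simpa using congrFun hdiff s
  have hM'row (k : S) : ∑ s, |M' k s| = 1 := by
    simp only [abs_of_nonneg (nonneg_of_mem_rowStochastic hM'), sum_row_of_mem_rowStochastic hM']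
  have hcontract := sum_abs_vecMul_le (d' - d) M'
  have hshift := sum_abs_vecMul_le d (M' - M)
  simp only [hM'row, mul_one, Pi.sub_apply, Matrix.sub_apply] at hcontract hshift
  have hsplit : ∑ s, |d' s - d s|
      ≤ γ * (∑ s, |((d' - d) ᵥ* M') s| + ∑ s, |(d ᵥ* (M' - M)) s|) := by
    rw [← sum_add_distrib, mul_sum]
    refine sum_le_sum fun s _ => ?_
    rw [hpt s, abs_mul, abs_of_nonneg hγ0]
    exact mul_le_mul_of_nonneg_left (abs_add_le _ _) hγ0
  linarith [mul_le_mul_of_nonneg_left hcontract hγ0, mul_le_mul_of_nonneg_left hshift hγ0]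

end Bellman

noncomputable def policyMean {S A : Type*} [Fintype A] (pol g : S → A → ℝ) (s : S) : ℝ :=
  ∑ a, pol s a * g s a

lemma sum_abs_transMat_sub_le {S A : Type*} [Fintype S] [Fintype A] {P : S → A → S → ℝ}
    (hP0 : ∀ s a s', 0 ≤ P s a s') (hP1 : ∀ s a, ∑ s', P s a s' = 1) (pol pol' : S → A → ℝ)
    (k : S) : ∑ s, |transMat P pol' k s - transMat P pol k s| ≤ ∑ a, |pol' k a - pol k a| := by
  calc ∑ s, |transMat P pol' k s - transMat P pol k s|
      = ∑ s, |((pol' k - pol k) ᵥ* P k) s| := by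
        simp only [transMat, vecMul, dotProduct, Pi.sub_apply, sub_mul, sum_sub_distrib]
    _ ≤ ∑ a, |pol' k a - pol k a| * ∑ s, |P k a s| := sum_abs_vecMul_le _ _
    _ = ∑ a, |pol' k a - pol k a| := by
        simp only [abs_of_nonneg (hP0 _ _ _), hP1, mul_one]

section MDP

variable {S A : Type*} [Fintype S] [DecidableEq S] [Fintype A] {P : S → A → S → ℝ} {γ : ℝ}
  {ρ0 : S → ℝ} {pol pol' : S → A → ℝ}

lemma transMat_mem_rowStochastic (hP0 : ∀ s a s', 0 ≤ P s a s')
    (hP1 : ∀ s a, ∑ s', P s a s' = 1) (hpol0 : ∀ s a, 0 ≤ pol s a)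
    (hpol1 : ∀ s, ∑ a, pol s a = 1) : transMat P pol ∈ rowStochastic ℝ S := by
  refine mem_rowStochastic_iff_sum.2
    ⟨fun s s' => sum_nonneg fun a _ => mul_nonneg (hpol0 s a) (hP0 s a s'), fun s => ?_⟩
  simp only [transMat]
  rw [sum_comm]
  simp only [← mul_sum, hP1, mul_one, hpol1]

lemma Vfun_eq_discountedResolvent_mulVec (hM : transMat P pol ∈ rowStochastic ℝ S)
    (hγ0 : 0 ≤ γ) (hγ1 : γ < 1) (F : S → A → ℝ) :
    Vfun P γ F pol = discountedResolvent γ (transMat P pol) *ᵥ policyMean pol F :=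
  funext fun s => (discountedResolvent_mulVec_apply hM hγ0 hγ1 _ s).symm

lemma dVisit_eq_vecMul_discountedResolvent (hM : transMat P pol ∈ rowStochastic ℝ S)
    (hγ0 : 0 ≤ γ) (hγ1 : γ < 1) :
    dVisit P γ ρ0 pol = (1 - γ) • ρ0 ᵥ* discountedResolvent γ (transMat P pol) :=
  funext fun s => by
    rw [Pi.smul_apply, smul_eq_mul, vecMul_discountedResolvent_apply hM hγ0 hγ1]
    rfl

lemma Vfun_eq_add_transMat_mulVec (hM : transMat P pol ∈ rowStochastic ℝ S) (hγ0 : 0 ≤ γ)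
    (hγ1 : γ < 1) (F : S → A → ℝ) :
    Vfun P γ F pol = policyMean pol F + γ • transMat P pol *ᵥ Vfun P γ F pol := by
  rw [Vfun_eq_discountedResolvent_mulVec hM hγ0 hγ1]
  conv_lhs => rw [discountedResolvent_eq_one_add_mul hM hγ0 hγ1]
  rw [add_mulVec, one_mulVec, smul_mulVec, mulVec_mulVec]

lemma dVisit_eq_add_vecMul_transMat (hM : transMat P pol ∈ rowStochastic ℝ S) (hγ0 : 0 ≤ γ)
    (hγ1 : γ < 1) :
    dVisit P γ ρ0 pol = (1 - γ) • ρ0 + γ • dVisit P γ ρ0 pol ᵥ* transMat P pol := by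
  rw [dVisit_eq_vecMul_discountedResolvent hM hγ0 hγ1]
  conv_lhs => rw [discountedResolvent_eq_one_add_mul' hM hγ0 hγ1]
  rw [vecMul_add, vecMul_one, vecMul_smul, smul_vecMul, vecMul_vecMul]
  module

lemma dVisit_nonneg (hM : transMat P pol ∈ rowStochastic ℝ S) (hγ0 : 0 ≤ γ) (hγ1 : γ < 1)
    (hρ0 : ∀ s, 0 ≤ ρ0 s) (s : S) : 0 ≤ dVisit P γ ρ0 pol s :=
  mul_nonneg (sub_nonneg.2 hγ1.le) (tsum_nonneg fun t => mul_nonneg (pow_nonneg hγ0 t)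
    (nonneg_vecMul_of_mem_rowStochastic (pow_mem hM t) hρ0 s))

lemma sum_dVisit (hM : transMat P pol ∈ rowStochastic ℝ S) (hγ0 : 0 ≤ γ) (hγ1 : γ < 1)
    (hρ1 : ∑ s, ρ0 s = 1) : ∑ s, dVisit P γ ρ0 pol s = 1 := by
  have hsum : ∑ s, (dVisit P γ ρ0 pol ᵥ* transMat P pol) s = ∑ s, dVisit P γ ρ0 pol s := by
    rw [← dotProduct_one, ← dotProduct_mulVec, one_vecMul_of_mem_rowStochastic hM, dotProduct_one]
  have h := congrArg (fun v => ∑ s, v s) (dVisit_eq_add_vecMul_transMat (ρ0 := ρ0) hM hγ0 hγ1)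
  simp only [Pi.add_apply, Pi.smul_apply, smul_eq_mul, sum_add_distrib, ← mul_sum, hρ1,
    hsum] at h
  refine mul_left_cancel₀ (sub_ne_zero.2 hγ1.ne') ?_
  linarith

lemma policyMean_Adv (hpol'1 : ∀ s, ∑ a, pol' s a = 1) (F : S → A → ℝ) :
    policyMean pol' (Adv P γ F pol)
      = policyMean pol' F + γ • transMat P pol' *ᵥ Vfun P γ F pol - Vfun P γ F pol := by
  ext s
  simp only [policyMean, Adv, Qfun, Pi.add_apply, Pi.sub_apply, Pi.smul_apply, smul_eq_mul,
    mulVec, dotProduct, transMat, mul_sub, mul_add, sum_sub_distrib, sum_add_distrib,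
    ← sum_mul, hpol'1, one_mul]
  congr 2
  simp only [mul_sum, sum_mul]
  rw [sum_comm]
  exact sum_congr rfl fun _ _ => sum_congr rfl fun _ _ => by ring

theorem performance_difference (hM' : transMat P pol' ∈ rowStochastic ℝ S) (hγ0 : 0 ≤ γ)
    (hγ1 : γ < 1) (hpol'1 : ∀ s, ∑ a, pol' s a = 1) (F : S → A → ℝ) :
    (1 - γ) * (Jret P γ ρ0 F pol' - Jret P γ ρ0 F pol)
      = dVisit P γ ρ0 pol' ⬝ᵥ policyMean pol' (Adv P γ F pol) := by
  rw [policyMean_Adv hpol'1, dotProduct_bellman_residual_eq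
    (dVisit_eq_add_vecMul_transMat hM' hγ0 hγ1) (Vfun_eq_add_transMat_mulVec hM' hγ0 hγ1 F)]
  rfl

lemma one_sub_mul_sum_abs_dVisit_sub_le (hP0 : ∀ s a s', 0 ≤ P s a s')
    (hP1 : ∀ s a, ∑ s', P s a s' = 1) (hγ0 : 0 ≤ γ) (hγ1 : γ < 1) (hρ0 : ∀ s, 0 ≤ ρ0 s)
    (hρ1 : ∑ s, ρ0 s = 1) (hpol0 : ∀ s a, 0 ≤ pol s a) (hpol1 : ∀ s, ∑ a, pol s a = 1)
    (hpol'0 : ∀ s a, 0 ≤ pol' s a) (hpol'1 : ∀ s, ∑ a, pol' s a = 1)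
    (habs : ∀ s a, pol s a = 0 → pol' s a = 0) :
    (1 - γ) * ∑ s, |dVisit P γ ρ0 pol' s - dVisit P γ ρ0 pol s|
      ≤ √2 * γ * √(avgKL P γ ρ0 pol' pol) := by
  have hM := transMat_mem_rowStochastic hP0 hP1 hpol0 hpol1
  have hM' := transMat_mem_rowStochastic hP0 hP1 hpol'0 hpol'1
  have hd0 := dVisit_nonneg (ρ0 := ρ0) hM hγ0 hγ1 hρ0
  have hKL0 (k : S) : 0 ≤ klState pol' pol k :=
    sum_mul_log_div_nonneg (hpol'0 k) (hpol0 k) (hpol'1 k) (hpol1 k) (habs k)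
  have hjensen : ∑ k, dVisit P γ ρ0 pol k * √(klState pol' pol k)
      ≤ √(avgKL P γ ρ0 pol' pol) := by
    simpa only [smul_eq_mul, avgKL] using Real.strictConcaveOn_sqrt.concaveOn.le_map_sum
      (fun k _ => hd0 k) (sum_dVisit hM hγ0 hγ1 hρ1) (fun k _ => hKL0 k)
  calc (1 - γ) * ∑ s, |dVisit P γ ρ0 pol' s - dVisit P γ ρ0 pol s|
      ≤ γ * ∑ k, |dVisit P γ ρ0 pol k| *
          ∑ s, |transMat P pol' k s - transMat P pol k s| :=
        one_sub_mul_sum_abs_sub_le hM' hγ0 (dVisit_eq_add_vecMul_transMat hM hγ0 hγ1)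
          (dVisit_eq_add_vecMul_transMat hM' hγ0 hγ1)
    _ ≤ γ * ∑ k, dVisit P γ ρ0 pol k * (√2 * √(klState pol' pol k)) := by
        refine mul_le_mul_of_nonneg_left (sum_le_sum fun k _ => ?_) hγ0
        rw [abs_of_nonneg (hd0 k)]
        exact mul_le_mul_of_nonneg_left ((sum_abs_transMat_sub_le hP0 hP1 pol pol' k).trans
          (sum_abs_sub_le_sqrt_two_mul_sum_mul_log (hpol'0 k) (hpol0 k) (hpol'1 k) (hpol1 k)
            (habs k))) (hd0 k)
    _ = √2 * γ * ∑ k, dVisit P γ ρ0 pol k * √(klState pol' pol k) := by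
        simp only [mul_sum]
        exact sum_congr rfl fun k _ => by ring
    _ ≤ √2 * γ * √(avgKL P γ ρ0 pol' pol) := by gcongr

end MDP

theorem performance_upper_bound_general {S A : Type*} [Fintype S] [DecidableEq S] [Fintype A] [Nonempty S]
    (P : S → A → S → ℝ) (hP0 : ∀ s a s', 0 ≤ P s a s') (hP1 : ∀ s a, ∑ s', P s a s' = 1)
    (γ : ℝ) (hγ0 : 0 < γ) (hγ1 : γ < 1)
    (ρ0 : S → ℝ) (hρ0 : ∀ s, 0 ≤ ρ0 s) (hρ1 : ∑ s, ρ0 s = 1)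
    (pol : S → A → ℝ) (hpol0 : ∀ s a, 0 ≤ pol s a) (hpol1 : ∀ s, ∑ a, pol s a = 1) (pol' : S → A → ℝ) (hpol'0 : ∀ s a, 0 ≤ pol' s a) (hpol'1 : ∀ s, ∑ a, pol' s a = 1)
    (habs : ∀ s a, pol s a = 0 → pol' s a = 0) (F : S → A → ℝ) :
    Jret P γ ρ0 F pol' - Jret P γ ρ0 F pol ≤
      (1 / (1 - γ)) * surrAdv P γ ρ0 F pol pol'
        + (Real.sqrt 2 * γ * epsAdv P γ F pol pol' / (1 - γ) ^ 2) *
          Real.sqrt (avgKL P γ ρ0 pol' pol) := by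
  set f := policyMean pol' (Adv P γ F pol)
  set ε := epsAdv P γ F pol pol'
  have hf (s : S) : |f s| ≤ ε := le_sup' (fun s => |f s|) (mem_univ s)
  have hε0 : 0 ≤ ε := (abs_nonneg _).trans (hf (Classical.arbitrary S))
  have hPD := performance_difference (ρ0 := ρ0) (pol := pol)
    (transMat_mem_rowStochastic hP0 hP1 hpol'0 hpol'1) hγ0.le hγ1 hpol'1 F
  have hshift : dVisit P γ ρ0 pol' ⬝ᵥ f - surrAdv P γ ρ0 F pol pol'
      ≤ ε * ∑ s, |dVisit P γ ρ0 pol' s - dVisit P γ ρ0 pol s| := by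
    rw [show surrAdv P γ ρ0 F pol pol' = dVisit P γ ρ0 pol ⬝ᵥ f from rfl, ← sub_dotProduct]
    exact dotProduct_le_mul_sum_abs hf
  have hKL := one_sub_mul_sum_abs_dVisit_sub_le hP0 hP1 hγ0.le hγ1 hρ0 hρ1 hpol0 hpol1 hpol'0
    hpol'1 habs
  have h1γ : 0 < 1 - γ := sub_pos.2 hγ1
  have hkey : (1 - γ) ^ 2 * (Jret P γ ρ0 F pol' - Jret P γ ρ0 F pol)
      ≤ (1 - γ) * surrAdv P γ ρ0 F pol pol' + √2 * γ * ε * √(avgKL P γ ρ0 pol' pol) := by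
    nlinarith [mul_le_mul_of_nonneg_left hKL hε0, mul_le_mul_of_nonneg_left hshift h1γ.le]
  calc Jret P γ ρ0 F pol' - Jret P γ ρ0 F pol
      = (1 - γ) ^ 2 * (Jret P γ ρ0 F pol' - Jret P γ ρ0 F pol) / (1 - γ) ^ 2 := by field_simp
    _ ≤ ((1 - γ) * surrAdv P γ ρ0 F pol pol' + √2 * γ * ε * √(avgKL P γ ρ0 pol' pol))
          / (1 - γ) ^ 2 := by gcongr
    _ = _ := by field_simp

/-- policy performance bound (Lemma 3.1, upper inequality). -/
theorem performance_upper_bound {S A : Type*} [Fintype S] [DecidableEq S] [Fintype A] [Nonempty S] [Nonempty A]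
    (P : S → A → S → ℝ) (hP0 : ∀ s a s', 0 ≤ P s a s') (hP1 : ∀ s a, ∑ s', P s a s' = 1)
    (γ : ℝ) (hγ0 : 0 < γ) (hγ1 : γ < 1)
    (ρ0 : S → ℝ) (hρ0 : ∀ s, 0 ≤ ρ0 s) (hρ1 : ∑ s, ρ0 s = 1)
    (pol : S → A → ℝ) (hpol0 : ∀ s a, 0 ≤ pol s a) (hpol1 : ∀ s, ∑ a, pol s a = 1) (pol' : S → A → ℝ) (hpol'0 : ∀ s a, 0 ≤ pol' s a) (hpol'1 : ∀ s, ∑ a, pol' s a = 1)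
    (habs : ∀ s a, pol s a = 0 → pol' s a = 0) (F : S → A → ℝ) :
    Jret P γ ρ0 F pol' - Jret P γ ρ0 F pol ≤
      (1 / (1 - γ)) * surrAdv P γ ρ0 F pol pol'
        + (Real.sqrt 2 * γ * epsAdv P γ F pol pol' / (1 - γ) ^ 2) *
          Real.sqrt (avgKL P γ ρ0 pol' pol) :=
  performance_upper_bound_general P hP0 hP1 γ hγ0 hγ1 ρ0 hρ0 hρ1 pol hpol0 hpol1 pol' hpol'0 hpol'1
    habs F
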